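/- Let $\phi_\epsilon : \mathbb{R} \to \mathbb{R}$ be defined by $\phi_\epsilon(z) = -\frac{1}{R_0(z)^2}\left[(b+a\omega)\int_{-\infty}^{z} R_0(s)^2\,ds + (d_1-a)\int_{-\infty}^{z} R_0(s)^4\,ds + (d_2-a\alpha)\int_{-\infty}^{z} R_0(s)^6\,ds\right]$. If $\phi_\epsilon$ is bounded on $\mathbb{R}$ (in particular, uniformly bounded as $z \to \infty$), then $\Lambda_2'\,a - \Lambda_2\,b - \Lambda_4\,d_1 - \Lambda_6\,d_2 = 0$. -/

import Mathlib

/-!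
Write `u = R₀²`. With `k = √(1 - β)` and `c = 2√ω`, the relations `k² = 1 + 16αω/3` and
`c² = 4ω` make `u = 4ω / (1 + k cosh (c z))` satisfy
`(u')² = 4ωu² - 2u³ - (4/3)αu⁴` and `u'' = 4ωu - 3u² - (8/3)αu³`.
Since `R₀'² = (u')² / (4u)`, the first gives `Λ₂' = ωΛ₂ - Λ₄/2 - αΛ₆/3`; integrating the second
over the line (`u'` decays at `±∞`) gives `4ωΛ₂ - 3Λ₄ - (8/3)αΛ₆ = 0`.
The bracket in `φ_ε` equals `-φ_ε R₀²`, which tends to `0` as `z → ∞` when `φ_ε` is bounded,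
while it also tends to `(b + aω)Λ₂ + (d₁ - a)Λ₄ + (d₂ - aα)Λ₆`; so this combination vanishes.
The three linear relations give the claim.
-/

open MeasureTheory Real Filter Topology Asymptotics

namespace Real

theorem one_add_half_sq_le_cosh (x : ℝ) : 1 + (x / 2) ^ 2 ≤ cosh x := by
  rw [← cosh_abs, cosh_eq]
  have h₁ := quadratic_le_exp_of_nonneg (abs_nonneg x)
  have h₂ := add_one_le_exp (-|x|)
  nlinarith [sq_abs x]

theorem abs_le_cosh (x : ℝ) : |x| ≤ cosh x :=
  (by nlinarith [sq_nonneg (|x| / 2 - 1), sq_abs x] : |x| ≤ 1 + (x / 2) ^ 2).trans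
    (one_add_half_sq_le_cosh x)

theorem tendsto_cosh_cocompact : Tendsto cosh (cocompact ℝ) atTop :=
  tendsto_atTop_mono abs_le_cosh tendsto_norm_cocompact_atTop

theorem one_le_one_add_mul_cosh {k : ℝ} (hk : 0 ≤ k) (x : ℝ) : 1 ≤ 1 + k * cosh x := by
  nlinarith [cosh_pos x]

end Real

namespace MeasureTheory

section
variable {X : Type*} [MeasurableSpace X] {μ : Measure X}

theorem Integrable.pow_of_abs_le {f : X → ℝ} {M : ℝ} (hf : Integrable f μ)
    (hM : ∀ x, |f x| ≤ M) {n : ℕ} (hn : n ≠ 0) : Integrable (fun x => f x ^ n) μ := by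
  obtain ⟨m, rfl⟩ := Nat.exists_eq_succ_of_ne_zero hn
  simpa only [Pi.pow_apply, pow_succ] using hf.bdd_mul (hf.aestronglyMeasurable.pow m)
    (ae_of_all _ fun x => by
      simpa only [Pi.pow_apply, norm_pow, Real.norm_eq_abs] using
        pow_le_pow_left₀ (abs_nonneg _) (hM x) m)

theorem integral_linear_combination_three {f g h : X → ℝ} (hf : Integrable f μ)
    (hg : Integrable g μ) (hh : Integrable h μ) (a b c : ℝ) :
    ∫ x, (a * f x + b * g x + c * h x) ∂μ =
      a * (∫ x, f x ∂μ) + b * (∫ x, g x ∂μ) + c * ∫ x, h x ∂μ := by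
  have hab : Integrable (fun x => a * f x + b * g x) μ := (hf.const_mul a).add (hg.const_mul b)
  rw [integral_add hab (hh.const_mul c), integral_add (hf.const_mul a) (hg.const_mul b),
    integral_const_mul, integral_const_mul, integral_const_mul]

end

theorem integral_eq_zero_of_isBigO_setIntegral_Iic {E F : Type*} [NormedAddCommGroup E]
    [NormedSpace ℝ E] [NormedAddCommGroup F] {f : ℝ → E} {ρ : ℝ → F} (hf : Integrable f)
    (hρ : Tendsto ρ atTop (𝓝 0)) (hO : (fun z => ∫ s in Set.Iic z, f s) =O[atTop] ρ) :
    ∫ s, f s = 0 := by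
  have hmono : Monotone (fun z : ℝ => Set.Iic z) := fun _ _ => Set.Iic_subset_Iic.mpr
  have htend := tendsto_setIntegral_of_monotone (fun _ => measurableSet_Iic) hmono
    (by rw [Set.iUnion_Iic]; exact hf.integrableOn)
  rw [Set.iUnion_Iic, setIntegral_univ] at htend
  exact tendsto_nhds_unique htend (hO.trans_tendsto hρ)

end MeasureTheory

noncomputable def brightSolitonSq (ω k c z : ℝ) : ℝ := 4 * ω / (1 + k * cosh (c * z))

noncomputable def brightSolitonSqDeriv (ω k c z : ℝ) : ℝ :=
  -(4 * ω * k * c * sinh (c * z)) / (1 + k * cosh (c * z)) ^ 2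

section BrightSoliton

variable {ω α k c : ℝ}

theorem brightSolitonSq_pos (hω : 0 < ω) (hk : 0 ≤ k) (z : ℝ) : 0 < brightSolitonSq ω k c z :=
  div_pos (by linarith) (by linarith [one_le_one_add_mul_cosh hk (c * z)])

theorem brightSolitonSq_le (hω : 0 < ω) (hk : 0 ≤ k) (z : ℝ) :
    brightSolitonSq ω k c z ≤ 4 * ω :=
  div_le_self (by linarith) (one_le_one_add_mul_cosh hk (c * z))

theorem integrable_inv_one_add_mul_cosh (hk : 0 < k) (hc : c ≠ 0) :
    Integrable fun z => (1 + k * cosh (c * z))⁻¹ := by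
  refine ((integrable_inv_one_add_sq.comp_mul_left' (div_ne_zero hc two_ne_zero)).const_mul
    k⁻¹).mono' (by fun_prop) (ae_of_all _ fun z => ?_)
  have h := one_add_half_sq_le_cosh (c * z)
  rw [mul_div_right_comm] at h
  rw [norm_inv, Real.norm_eq_abs,
    abs_of_pos (by linarith [one_le_one_add_mul_cosh hk.le (c * z)]), ← mul_inv]
  gcongr
  nlinarith [cosh_pos (c * z)]

theorem integrable_brightSolitonSq (hk : 0 < k) (hc : c ≠ 0) :
    Integrable (brightSolitonSq ω k c) :=
  ((integrable_inv_one_add_mul_cosh hk hc).const_mul (4 * ω)).congr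
    (ae_of_all _ fun _ => (div_eq_mul_inv _ _).symm)

theorem integrable_brightSolitonSq_pow (hω : 0 < ω) (hk : 0 < k) (hc : c ≠ 0) {n : ℕ}
    (hn : n ≠ 0) : Integrable fun z => brightSolitonSq ω k c z ^ n :=
  (integrable_brightSolitonSq hk hc).pow_of_abs_le (fun z => by
    rw [abs_of_pos (brightSolitonSq_pos hω hk.le z)]; exact brightSolitonSq_le hω hk.le z) hn

theorem tendsto_brightSolitonSq_cocompact (hk : 0 < k) (hc : c ≠ 0) :
    Tendsto (brightSolitonSq ω k c) (cocompact ℝ) (𝓝 0) := by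
  have hD : Tendsto (fun z => 1 + k * cosh (c * z)) (cocompact ℝ) atTop :=
    tendsto_atTop_add_const_left _ 1
      ((tendsto_cosh_cocompact.comp (tendsto_cocompact_mul_left₀ hc)).const_mul_atTop hk)
  have h := (tendsto_inv_atTop_zero.comp hD).const_mul (4 * ω)
  rw [mul_zero] at h
  exact h.congr fun _ => (div_eq_mul_inv _ _).symm

theorem hasDerivAt_brightSolitonSq (hk : 0 ≤ k) (z : ℝ) :
    HasDerivAt (brightSolitonSq ω k c) (brightSolitonSqDeriv ω k c z) z := by
  have hD : HasDerivAt (fun y => 1 + k * cosh (c * y)) (k * (sinh (c * z) * c)) z :=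
    (((hasDerivAt_id z).const_mul c).cosh.const_mul k).const_add 1 |>.congr_deriv (by simp)
  exact ((hasDerivAt_const z (4 * ω)).div hD
    (by linarith [one_le_one_add_mul_cosh hk (c * z)])).congr_deriv
    (by rw [brightSolitonSqDeriv]; ring)

theorem abs_brightSolitonSqDeriv_le (hω : 0 < ω) (hk : 0 ≤ k) (z : ℝ) :
    |brightSolitonSqDeriv ω k c z| ≤ |c| * brightSolitonSq ω k c z := by
  have hD := one_le_one_add_mul_cosh hk (c * z)
  have hsinh : k * |sinh (c * z)| ≤ 1 + k * cosh (c * z) := by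
    have : |sinh (c * z)| ≤ cosh (c * z) := by
      rw [abs_sinh, ← cosh_abs]; exact (sinh_lt_cosh _).le
    nlinarith
  calc |brightSolitonSqDeriv ω k c z|
      = |c| * brightSolitonSq ω k c z * (k * |sinh (c * z)| / (1 + k * cosh (c * z))) := by
        rw [brightSolitonSqDeriv, brightSolitonSq, abs_div, abs_neg,
          abs_of_pos (by positivity : (0 : ℝ) < (1 + k * cosh (c * z)) ^ 2)]
        simp only [abs_mul, abs_of_pos hω, abs_of_nonneg hk]
        field_simp
        ring
    _ ≤ |c| * brightSolitonSq ω k c z * 1 := by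
        gcongr
        · exact mul_nonneg (abs_nonneg c) (brightSolitonSq_pos hω hk z).le
        · exact div_le_one_of_le₀ hsinh (by linarith)
    _ = |c| * brightSolitonSq ω k c z := mul_one _

theorem brightSolitonSqDeriv_sq (hk0 : 0 ≤ k) (hk : k ^ 2 = 1 + 16 / 3 * α * ω)
    (hc : c ^ 2 = 4 * ω) (z : ℝ) :
    brightSolitonSqDeriv ω k c z ^ 2 =
      4 * ω * brightSolitonSq ω k c z ^ 2 - 2 * brightSolitonSq ω k c z ^ 3
        - 4 / 3 * α * brightSolitonSq ω k c z ^ 4 := by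
  have hD : 1 + k * cosh (c * z) ≠ 0 := by linarith [one_le_one_add_mul_cosh hk0 (c * z)]
  unfold brightSolitonSqDeriv brightSolitonSq
  field_simp
  ring_nf
  rw [hc, sinh_sq]
  linear_combination -12 * ω ^ 3 * hk

theorem hasDerivAt_brightSolitonSqDeriv (hk0 : 0 ≤ k) (hk : k ^ 2 = 1 + 16 / 3 * α * ω)
    (hc : c ^ 2 = 4 * ω) (z : ℝ) :
    HasDerivAt (brightSolitonSqDeriv ω k c)
      (4 * ω * brightSolitonSq ω k c z - 3 * brightSolitonSq ω k c z ^ 2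
        - 8 / 3 * α * brightSolitonSq ω k c z ^ 3) z := by
  have hcz : HasDerivAt (fun y => c * y) c z := by simpa using (hasDerivAt_id z).const_mul c
  have hN := (hcz.sinh.const_mul (4 * ω * k * c)).neg
  have hD := ((hcz.cosh.const_mul k).const_add 1).pow 2
  have hD0 : 1 + k * cosh (c * z) ≠ 0 := by linarith [one_le_one_add_mul_cosh hk0 (c * z)]
  refine (hN.div hD (pow_ne_zero 2 hD0)).congr_deriv ?_
  simp only [brightSolitonSq, Pi.pow_apply, Pi.neg_apply]
  field_simp
  ring_nf
  rw [hc, sinh_sq]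
  linear_combination -24 * ω ^ 2 * (1 + k * cosh (c * z)) * hk

theorem deriv_sqrt_brightSolitonSq_sq (hω : 0 < ω) (hk0 : 0 ≤ k)
    (hk : k ^ 2 = 1 + 16 / 3 * α * ω) (hc : c ^ 2 = 4 * ω) (z : ℝ) :
    deriv (fun y => √(brightSolitonSq ω k c y)) z ^ 2 =
      ω * brightSolitonSq ω k c z - 1 / 2 * brightSolitonSq ω k c z ^ 2
        - α / 3 * brightSolitonSq ω k c z ^ 3 := by
  have hu := brightSolitonSq_pos hω hk0 (c := c) z
  rw [((hasDerivAt_brightSolitonSq hk0 z).sqrt hu.ne').deriv, div_pow, mul_pow, sq_sqrt hu.le,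
    brightSolitonSqDeriv_sq hk0 hk hc]
  field_simp
  ring

theorem brightSolitonSq_virial_identity (hω : 0 < ω) (hk0 : 0 < k)
    (hk : k ^ 2 = 1 + 16 / 3 * α * ω) (hc : c ^ 2 = 4 * ω) :
    4 * ω * (∫ z, brightSolitonSq ω k c z) - 3 * (∫ z, brightSolitonSq ω k c z ^ 2)
      - 8 / 3 * α * (∫ z, brightSolitonSq ω k c z ^ 3) = 0 := by
  have hc0 : c ≠ 0 := by rintro rfl; linarith
  have hu := integrable_brightSolitonSq (ω := ω) hk0 hc0
  have hu2 := integrable_brightSolitonSq_pow hω hk0 hc0 two_ne_zero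
  have hu3 := integrable_brightSolitonSq_pow hω hk0 hc0 three_ne_zero
  have hderiv_tendsto : Tendsto (brightSolitonSqDeriv ω k c) (cocompact ℝ) (𝓝 0) := by
    refine squeeze_zero_norm (fun z => abs_brightSolitonSqDeriv_le hω hk0.le z) ?_
    simpa using (tendsto_brightSolitonSq_cocompact hk0 hc0).const_mul |c|
  calc 4 * ω * (∫ z, brightSolitonSq ω k c z) - 3 * (∫ z, brightSolitonSq ω k c z ^ 2)
        - 8 / 3 * α * (∫ z, brightSolitonSq ω k c z ^ 3)
      = ∫ z, (4 * ω * brightSolitonSq ω k c z + (-3) * brightSolitonSq ω k c z ^ 2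
          + (-(8 / 3 * α)) * brightSolitonSq ω k c z ^ 3) := by
        rw [integral_linear_combination_three hu hu2 hu3]; ring
    _ = ∫ z, (4 * ω * brightSolitonSq ω k c z - 3 * brightSolitonSq ω k c z ^ 2
          - 8 / 3 * α * brightSolitonSq ω k c z ^ 3) := by
        congr 1; ext z; ring
    _ = 0 := by
        rw [integral_of_hasDerivAt_of_tendsto (hasDerivAt_brightSolitonSqDeriv hk0.le hk hc)
          (((hu.const_mul _).sub (hu2.const_mul _)).sub (hu3.const_mul _))
          (hderiv_tendsto.mono_left atBot_le_cocompact)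
          (hderiv_tendsto.mono_left atTop_le_cocompact), sub_self]

theorem brightSolitonSq_moments_eq_zero_of_bounded (hω : 0 < ω) (hk : 0 < k) (hc : c ≠ 0)
    {p q r C : ℝ} (φ : ℝ → ℝ)
    (hφ : ∀ z, φ z = -(1 / brightSolitonSq ω k c z) *
      (p * (∫ s in Set.Iic z, brightSolitonSq ω k c s)
        + q * (∫ s in Set.Iic z, brightSolitonSq ω k c s ^ 2)
        + r * ∫ s in Set.Iic z, brightSolitonSq ω k c s ^ 3))
    (hC : ∀ z, |φ z| ≤ C) :
    p * (∫ s, brightSolitonSq ω k c s) + q * (∫ s, brightSolitonSq ω k c s ^ 2)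
      + r * (∫ s, brightSolitonSq ω k c s ^ 3) = 0 := by
  have hu := integrable_brightSolitonSq (ω := ω) hk hc
  have hu2 := integrable_brightSolitonSq_pow hω hk hc two_ne_zero
  have hu3 := integrable_brightSolitonSq_pow hω hk hc three_ne_zero
  rw [← integral_linear_combination_three hu hu2 hu3]
  refine integral_eq_zero_of_isBigO_setIntegral_Iic
    (((hu.const_mul _).add (hu2.const_mul _)).add (hu3.const_mul _))
    ((tendsto_brightSolitonSq_cocompact (ω := ω) hk hc).mono_left atTop_le_cocompact)
    (IsBigO.of_bound C (Eventually.of_forall fun z => ?_))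
  have hz := (brightSolitonSq_pos hω hk.le (c := c) z).ne'
  have hφz : p * (∫ s in Set.Iic z, brightSolitonSq ω k c s)
      + q * (∫ s in Set.Iic z, brightSolitonSq ω k c s ^ 2)
      + r * (∫ s in Set.Iic z, brightSolitonSq ω k c s ^ 3) = -φ z * brightSolitonSq ω k c z := by
    rw [hφ z]; field_simp
  rw [integral_linear_combination_three hu.integrableOn hu2.integrableOn hu3.integrableOn, hφz,
    norm_mul, norm_neg]
  exact mul_le_mul_of_nonneg_right (hC z) (norm_nonneg _)

end BrightSoliton

theorem stmt8_general (ω α β a b d1 d2 : ℝ) (hω : 0 < ω) (hβ : β = -(16 / 3) * α * ω)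
    (hβ1 : β < 1)
    (R0 : ℝ → ℝ)
    (hR0 : ∀ z : ℝ, R0 z =
      Real.sqrt (4 * ω / (1 + Real.sqrt (1 - β) * Real.cosh (2 * Real.sqrt ω * z))))
    (φε : ℝ → ℝ)
    (hφε : ∀ z : ℝ, φε z = -(1 / (R0 z) ^ 2) *
      ((b + a * ω) * (∫ s in Set.Iic z, (R0 s) ^ 2)
        + (d1 - a) * (∫ s in Set.Iic z, (R0 s) ^ 4)
        + (d2 - a * α) * ∫ s in Set.Iic z, (R0 s) ^ 6))
    (hbdd : ∃ C : ℝ, ∀ z : ℝ, |φε z| ≤ C) :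
    (∫ s : ℝ, (deriv R0 s) ^ 2) * a - (∫ s : ℝ, (R0 s) ^ 2) * b
      - (∫ s : ℝ, (R0 s) ^ 4) * d1 - (∫ s : ℝ, (R0 s) ^ 6) * d2 = 0 := by
  obtain ⟨C, hC⟩ := hbdd
  set k := √(1 - β)
  set c := 2 * √ω
  have hk0 : 0 < k := Real.sqrt_pos.2 (by linarith)
  have hk : k ^ 2 = 1 + 16 / 3 * α * ω := by rw [Real.sq_sqrt (by linarith), hβ]; ring
  have hc0 : c ≠ 0 := by positivity
  have hc : c ^ 2 = 4 * ω := by rw [mul_pow, Real.sq_sqrt hω.le]; norm_num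
  have hR0u : R0 = fun z => √(brightSolitonSq ω k c z) := funext hR0
  have hsq : ∀ z, R0 z ^ 2 = brightSolitonSq ω k c z := fun z => by
    rw [hR0u, Real.sq_sqrt (brightSolitonSq_pos hω hk0.le z).le]
  have h4 : ∀ z, R0 z ^ 4 = brightSolitonSq ω k c z ^ 2 := fun z => by rw [← hsq]; ring
  have h6 : ∀ z, R0 z ^ 6 = brightSolitonSq ω k c z ^ 3 := fun z => by rw [← hsq]; ring
  have hder : ∀ s, deriv R0 s ^ 2 = ω * brightSolitonSq ω k c s
      + (-(1 / 2)) * brightSolitonSq ω k c s ^ 2 + (-(α / 3)) * brightSolitonSq ω k c s ^ 3 := by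
    intro s; rw [hR0u, deriv_sqrt_brightSolitonSq_sq hω hk0.le hk hc]; ring
  simp only [h4, h6, hsq, hder] at hφε ⊢
  rw [integral_linear_combination_three (integrable_brightSolitonSq hk0 hc0)
    (integrable_brightSolitonSq_pow hω hk0 hc0 two_ne_zero)
    (integrable_brightSolitonSq_pow hω hk0 hc0 three_ne_zero)]
  linear_combination a / 2 * brightSolitonSq_virial_identity hω hk0 hk hc
    - brightSolitonSq_moments_eq_zero_of_bounded hω hk0 hc0 φε hφε hC

/-- With `φ_ε` as in Statement 6, if `φ_ε` is bounded on `ℝ`, then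
`Λ₂' a - Λ₂ b - Λ₄ d₁ - Λ₆ d₂ = 0` (a necessary condition for existence of the
bright solitary wave). -/
theorem stmt8 (ω α β a b d1 d2 : ℝ) (hω : 0 < ω) (hβ : β = -(16 / 3) * α * ω)
    (hβ0 : 0 ≤ β) (hβ1 : β < 1)
    (R0 : ℝ → ℝ)
    (hR0 : ∀ z : ℝ, R0 z =
      Real.sqrt (4 * ω / (1 + Real.sqrt (1 - β) * Real.cosh (2 * Real.sqrt ω * z))))
    (φε : ℝ → ℝ)
    (hφε : ∀ z : ℝ, φε z = -(1 / (R0 z) ^ 2) *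
      ((b + a * ω) * (∫ s in Set.Iic z, (R0 s) ^ 2)
        + (d1 - a) * (∫ s in Set.Iic z, (R0 s) ^ 4)
        + (d2 - a * α) * ∫ s in Set.Iic z, (R0 s) ^ 6))
    (hbdd : ∃ C : ℝ, ∀ z : ℝ, |φε z| ≤ C) :
    (∫ s : ℝ, (deriv R0 s) ^ 2) * a - (∫ s : ℝ, (R0 s) ^ 2) * b
      - (∫ s : ℝ, (R0 s) ^ 4) * d1 - (∫ s : ℝ, (R0 s) ^ 6) * d2 = 0 :=
  stmt8_general ω α β a b d1 d2 hω hβ hβ1 R0 hR0 φε hφε hbdd
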